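/- Every continuous real-valued function on a compact subspace X of ℝ^S depends on countably many coordinates: if X ⊆ ℝ^S is compact and g : X → ℝ is continuous, then there exists a countable set S₀ ⊆ S such that g(x') = g(x'') for all x', x'' ∈ X with x'|_{S₀} = x''|_{S₀}. -/

import Mathlib

/-!
A continuous function on the compact space `X` is uniformly continuous, and every entourage of the
product uniformity on `ℝ^S` contains all pairs of points that agree on some finite set of
coordinates. Hence for each `ε = 1/(n+1)` there is a finite `F n ⊆ S` such that points of `X`
agreeing on `F n` have `g`-values within `ε`; the countable set `⋃ n, F n` then does the job.
-/

open Set Filter Uniformity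

section

variable {ι : Type*} {E : ι → Type*} [∀ i, UniformSpace (E i)]

theorem Pi.exists_finite_forall_eq_imp_mem_of_mem_uniformity
    {U : Set ((Π i, E i) × (Π i, E i))} (hU : U ∈ 𝓤 (Π i, E i)) :
    ∃ F : Set ι, F.Finite ∧ ∀ x y : Π i, E i, (∀ i ∈ F, x i = y i) → (x, y) ∈ U := by
  rw [Pi.uniformity] at hU
  obtain ⟨F, hF, V, hV, rfl⟩ := mem_iInf.mp hU
  refine ⟨F, hF, fun x y hxy => mem_iInter.mpr fun i => ?_⟩
  obtain ⟨W, hW, hWV⟩ := mem_comap.mp (hV i)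
  exact hWV (by simpa [hxy i i.2] using refl_mem_uniformity hW)

theorem UniformContinuous.exists_finite_forall_eq_imp_dist_lt
    {X : Set (Π i, E i)} {β : Type*} [PseudoMetricSpace β] {g : X → β}
    (hg : UniformContinuous g) {ε : ℝ} (hε : 0 < ε) :
    ∃ F : Set ι, F.Finite ∧ ∀ x y : X, (∀ i ∈ F, (x : Π i, E i) i = (y : Π i, E i) i) →
      dist (g x) (g y) < ε := by
  obtain ⟨U, hU, hUg⟩ := mem_comap.mp (hg (Metric.dist_mem_uniformity hε))
  obtain ⟨F, hF, hFU⟩ := Pi.exists_finite_forall_eq_imp_mem_of_mem_uniformity hU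
  exact ⟨F, hF, fun x y hxy => @hUg (x, y) (hFU x y hxy)⟩

theorem UniformContinuous.exists_countable_forall_eq_imp_eq
    {X : Set (Π i, E i)} {β : Type*} [MetricSpace β] {g : X → β} (hg : UniformContinuous g) :
    ∃ S₀ : Set ι, S₀.Countable ∧ ∀ x y : X, (∀ i ∈ S₀, (x : Π i, E i) i = (y : Π i, E i) i) →
      g x = g y := by
  choose F hF hFg using fun n : ℕ =>
    hg.exists_finite_forall_eq_imp_dist_lt (Nat.one_div_pos_of_nat (n := n))
  refine ⟨⋃ n, F n, countable_iUnion fun n => (hF n).countable, fun x y hxy => ?_⟩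
  refine eq_of_forall_dist_le fun ε hε => ?_
  obtain ⟨n, hn⟩ := exists_nat_one_div_lt hε
  exact (hFg n x y fun i hi => hxy i (mem_iUnion_of_mem n hi)).le.trans hn.le

end

/-- Every continuous real-valued function on a compact subspace of `ℝ^S`
depends on countably many coordinates. -/
theorem stmt3 {S : Type*} (X : Set (S → ℝ)) (hX : IsCompact X)
    (g : X → ℝ) (hg : Continuous g) :
    ∃ S₀ : Set S, S₀.Countable ∧
      ∀ x' x'' : X, (∀ s ∈ S₀, (x' : S → ℝ) s = (x'' : S → ℝ) s) →
        g x' = g x'' := by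
  have : CompactSpace X := isCompact_iff_compactSpace.mp hX
  exact UniformContinuous.exists_countable_forall_eq_imp_eq
    (CompactSpace.uniformContinuous_of_continuous hg)
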